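/- arXiv:2310.06312 — 4 statements merged into one kernel-verified Lean document; each statement's English description precedes it below -/
import Mathlib

section
/- Let f_1,…,f_K : X → ℝ be nonnegative functions. Suppose for each k there exists a point a_k ∈ X with f_k(a_k) > (1/2) Σ_{j=1}^K f_j(a_k). Then f_1,…,f_K are linearly independent over ℝ. -/
/-- Nonnegative functions, each of which somewhere exceeds half the total sum of the
family, are linearly independent over ℝ. -/
theorem stmt_2 {X : Type*} {K : ℕ} (f : Fin K → X → ℝ)
    (hnn : ∀ k x, 0 ≤ f k x)
    (hdiv : ∀ k, ∃ a : X, (1 / 2) * ∑ j, f j a < f k a) :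
    LinearIndependent ℝ f := by
  rw [Fintype.linearIndependent_iff]
  intro g hg
  by_contra h
  push_neg at h
  obtain ⟨i₀, hi₀⟩ := h
  obtain ⟨k, -, hk⟩ := Finset.exists_max_image Finset.univ (fun j => |g j|)
    ⟨i₀, Finset.mem_univ i₀⟩
  have hgk : 0 < |g k| :=
    lt_of_lt_of_le (abs_pos.mpr hi₀) (hk i₀ (Finset.mem_univ i₀))
  obtain ⟨a, ha⟩ := hdiv k
  have hsum : ∑ j, g j * f j a = 0 := by
    have := congrFun hg a
    simpa using this
  have hsplit := Finset.add_sum_erase Finset.univ (fun j => f j a) (Finset.mem_univ k)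
  have hrest : ∑ j ∈ Finset.univ.erase k, f j a < f k a := by
    linarith
  have hsplit2 := Finset.add_sum_erase Finset.univ (fun j => g j * f j a) (Finset.mem_univ k)
  have h1 : g k * f k a = -∑ j ∈ Finset.univ.erase k, g j * f j a := by
    linarith
  have h2 : |g k| * f k a ≤ ∑ j ∈ Finset.univ.erase k, |g j| * f j a := by
    calc |g k| * f k a = |g k * f k a| := by
          rw [abs_mul, abs_of_nonneg (hnn k a)]
      _ = |∑ j ∈ Finset.univ.erase k, g j * f j a| := by rw [h1, abs_neg]
      _ ≤ ∑ j ∈ Finset.univ.erase k, |g j * f j a| :=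
          Finset.abs_sum_le_sum_abs _ _
      _ = ∑ j ∈ Finset.univ.erase k, |g j| * f j a := by
          refine Finset.sum_congr rfl fun j _ => ?_
          rw [abs_mul, abs_of_nonneg (hnn j a)]
  have h3 : ∑ j ∈ Finset.univ.erase k, |g j| * f j a
      ≤ |g k| * ∑ j ∈ Finset.univ.erase k, f j a := by
    rw [Finset.mul_sum]
    exact Finset.sum_le_sum fun j _ =>
      mul_le_mul_of_nonneg_right (hk j (Finset.mem_univ j)) (hnn j a)
  have h4 : |g k| * ∑ j ∈ Finset.univ.erase k, f j a < |g k| * f k a :=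
    mul_lt_mul_of_pos_left hrest hgk
  linarith
end

section
/- Let W^{(k)} = [[0, w₁^{(k)}],[w₂^{(k)}, 0]] be 2×2 matrices with w₁^{(k)} w₂^{(k)} = 0 (acyclicity) for k = 1,2, and set B^{(k)} = I − W^{(k)}. Then B^{(1)} (B^{(1)})ᵀ = B^{(2)} (B^{(2)})ᵀ if and only if W^{(1)} = W^{(2)}. -/
open Matrix

/-- 2-variable lag-0 linear SCM identifiability: with acyclicity, `B Bᵀ` determines `W`. -/
theorem stmt_7 (w₁ w₂ v₁ v₂ : ℝ) (h₁ : w₁ * w₂ = 0) (h₂ : v₁ * v₂ = 0) :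
    (!![(1 : ℝ), -w₁; -w₂, 1]) * (!![(1 : ℝ), -w₁; -w₂, 1])ᵀ =
      (!![(1 : ℝ), -v₁; -v₂, 1]) * (!![(1 : ℝ), -v₁; -v₂, 1])ᵀ ↔
    (!![(0 : ℝ), w₁; w₂, 0]) = (!![(0 : ℝ), v₁; v₂, 0]) := by
  simp only [← Matrix.ext_iff, Fin.forall_fin_two]
  simp [Matrix.mul_apply, Fin.sum_univ_two]
  constructor
  · rintro ⟨⟨ha, hb⟩, hc, hd⟩
    rcases mul_eq_zero.mp h₁ with h | h <;> rcases mul_eq_zero.mp h₂ with h' | h' <;>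
      constructor <;> nlinarith [sq_nonneg (w₁ - v₁), sq_nonneg (w₂ - v₂), sq_nonneg (w₁ + v₁), sq_nonneg (w₂ + v₂)]
  · rintro ⟨h, h'⟩
    subst h; subst h'; simp
end

section
/- Let {f_θ} be a family of probability densities parameterized injectively by θ (i.e., f_{θ₁} = f_{θ₂} implies θ₁ = θ₂), and suppose the family {f_θ : θ} is linearly independent over ℝ. Then for any two K-mixtures Σ_k π_k f_{θ_k} = Σ_j π'_j f_{θ'_j} with distinct θ_k's, distinct θ'_j's, and strictly positive weights summing to 1, there is a bijection matching each (π_k, θ_k) with some (π'_j, θ'_j). -/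
/-- Mixture identifiability for an injectively parameterized, linearly independent family
of densities: equal `K`-mixtures with distinct parameters and positive weights summing to
one agree up to a permutation matching weights and parameters. -/
theorem stmt_12 {Θ X : Type*} {K : ℕ} (f : Θ → X → ℝ)
    (hfinj : Function.Injective f)
    (hli : LinearIndependent ℝ f)
    (θ θ' : Fin K → Θ) (hθ : Function.Injective θ) (hθ' : Function.Injective θ')
    (π π' : Fin K → ℝ) (hπ : ∀ k, 0 < π k) (hπ' : ∀ j, 0 < π' j)
    (hsum : ∑ k, π k = 1) (hsum' : ∑ j, π' j = 1)
    (heq : ∑ k, π k • f (θ k) = ∑ j, π' j • f (θ' j)) :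
    ∃ σ : Equiv.Perm (Fin K), ∀ k, π' (σ k) = π k ∧ θ' (σ k) = θ k := by
  classical
  have hli' := linearIndependent_iff.mp hli
  set l : Θ →₀ ℝ :=
      (∑ k, Finsupp.single (θ k) (π k)) - (∑ j, Finsupp.single (θ' j) (π' j)) with hl
  have hl0 : l = 0 := by
    apply hli'
    rw [hl, map_sub, map_sum, map_sum]
    simp only [Finsupp.linearCombination_single]
    rw [heq, sub_self]
  have key : ∀ k, ∃ j, θ' j = θ k ∧ π' j = π k := by
    intro k
    have h1 : (∑ k', Finsupp.single (θ k') (π k')) (θ k) = π k := by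
      rw [Finsupp.finset_sum_apply, Finset.sum_eq_single k]
      · simp
      · intro k' _ hk'
        rw [Finsupp.single_apply, if_neg (fun h => hk' (hθ h))]
      · simp
    have h2 : (∑ j, Finsupp.single (θ' j) (π' j)) (θ k) = π k := by
      have h := DFunLike.congr_fun hl0 (θ k)
      rw [hl, Finsupp.sub_apply, Finsupp.coe_zero, Pi.zero_apply, h1, sub_eq_zero] at h
      exact h.symm
    rw [Finsupp.finset_sum_apply] at h2
    simp only [Finsupp.single_apply] at h2
    have hne : ∑ j, (if θ' j = θ k then π' j else 0) ≠ 0 := by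
      rw [h2]; exact (hπ k).ne'
    obtain ⟨j, -, hj⟩ := Finset.exists_ne_zero_of_sum_ne_zero hne
    have hjk : θ' j = θ k := by
      by_contra hc
      rw [if_neg hc] at hj
      exact hj rfl
    refine ⟨j, hjk, ?_⟩
    rw [← h2, Finset.sum_eq_single j]
    · rw [if_pos hjk]
    · intro j' _ hj'
      rw [if_neg]
      intro hc
      exact hj' (hθ' (hc.trans hjk.symm))
    · simp
  choose g hg1 hg2 using key
  have ginj : Function.Injective g := fun a b h => hθ (by rw [← hg1 a, ← hg1 b, h])
  exact ⟨Equiv.ofBijective g (Finite.injective_iff_bijective.mp ginj),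
    fun k => ⟨hg2 k, hg1 k⟩⟩
end

section
/- Finite mixtures of distinct univariate Gaussian densities are identifiable: if Σ_{k=1}^K π_k φ(x; μ_k, σ_k²) = Σ_{j=1}^K π'_j φ(x; μ'_j, σ'_j²) for all x ∈ ℝ, where the pairs (μ_k, σ_k²) are pairwise distinct, the pairs (μ'_j, σ'_j²) are pairwise distinct, and all weights are positive and sum to 1, then the multisets {(π_k, μ_k, σ_k²)} and {(π'_j, μ'_j, σ'_j²)} coincide. -/
/-!
Writing `φ(x; μ, v) = c(μ, v) · exp (-x² / (2v) + (μ / v) x)` with `c(μ, v) > 0`, a Gaussian mixture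
is a linear combination of the functions `x ↦ exp (a x² + b x)`, and `(μ, v) ↦ (-1/(2v), μ/v)` is
injective. These exponentials are linearly independent: dividing a vanishing combination by the
term whose `(a, b)` is lexicographically largest, every other term tends to `0` as `x → ∞`, so
its coefficient vanishes. Hence the mixture determines the finitely supported weight function
`(μ, v) ↦ π`, and with distinct parameters and nonzero weights this function determines the
multiset of triples.
-/

/-- The univariate Gaussian density with mean `μ` and variance `v`. -/
noncomputable def gaussPDF (μ v x : ℝ) : ℝ :=
  (Real.sqrt (2 * Real.pi * v))⁻¹ * Real.exp (-(x - μ) ^ 2 / (2 * v))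

open Filter Real Topology Finset Finsupp

namespace Finsupp

variable {ι α R V : Type*} [Fintype ι]

theorem linearCombination_mapDomain_equivFunOnFinite_symm [Semiring R] [AddCommMonoid V]
    [Module R V] (g : α → V) (p : ι → α) (w : ι → R) :
    linearCombination R g (mapDomain p (equivFunOnFinite.symm w)) = ∑ k, w k • g (p k) := by
  rw [linearCombination_mapDomain, linearCombination_apply, sum_fintype _ _ (by simp)]
  rfl

theorem map_univ_val_eq_map_support_mapDomain [AddCommMonoid R] {p : ι → α}
    (hp : Function.Injective p) {w : ι → R} (hw : ∀ k, w k ≠ 0) :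
    letI F := mapDomain p (equivFunOnFinite.symm w)
    univ.val.map (fun k => (w k, p k)) = F.support.val.map fun a => (F a, a) := by
  classical
  have hsupp : (equivFunOnFinite.symm w).support = univ := by
    ext k; simp [hw k]
  rw [mapDomain_support_of_injective hp, hsupp, image_val_of_injOn hp.injOn, Multiset.map_map]
  refine Multiset.map_congr rfl fun k _ => ?_
  simp [mapDomain_apply hp]

end Finsupp

theorem LinearIndependent.map_univ_val_eq_of_sum_eq {ι ι' α R V : Type*} [Fintype ι] [Fintype ι']
    [Semiring R] [AddCommMonoid V] [Module R V] {g : α → V} (hg : LinearIndependent R g)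
    {p : ι → α} {p' : ι' → α} (hp : Function.Injective p) (hp' : Function.Injective p')
    {w : ι → R} {w' : ι' → R} (hw : ∀ k, w k ≠ 0) (hw' : ∀ j, w' j ≠ 0)
    (h : ∑ k, w k • g (p k) = ∑ j, w' j • g (p' j)) :
    univ.val.map (fun k => (w k, p k)) = univ.val.map (fun j => (w' j, p' j)) := by
  have hF : mapDomain p (equivFunOnFinite.symm w) = mapDomain p' (equivFunOnFinite.symm w') :=
    hg (by simpa only [linearCombination_mapDomain_equivFunOnFinite_symm] using h)
  rw [map_univ_val_eq_map_support_mapDomain hp hw, map_univ_val_eq_map_support_mapDomain hp' hw',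
    hF]

noncomputable def expQuad (q : ℝ × ℝ) (x : ℝ) : ℝ := exp (q.1 * x ^ 2 + q.2 * x)

theorem tendsto_expQuad_div_expQuad {q m : ℝ × ℝ} (h : toLex q < toLex m) :
    Tendsto (fun x => expQuad q x / expQuad m x) atTop (𝓝 0) := by
  simp only [expQuad, ← exp_sub]
  refine tendsto_exp_atBot.comp ?_
  rcases Prod.Lex.toLex_lt_toLex.1 h with h1 | ⟨h1, h2⟩
  · have hlin : Tendsto (fun x : ℝ => (q.1 - m.1) * x + (q.2 - m.2)) atTop atBot :=
      tendsto_atBot_add_const_right _ _ (tendsto_id.const_mul_atTop_of_neg (sub_neg.2 h1))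
    exact (tendsto_id.atTop_mul_atBot₀ hlin).congr fun x => by simp only [id]; ring
  · refine (tendsto_id.const_mul_atTop_of_neg (sub_neg.2 h2)).congr fun x => ?_
    simp only [id, h1]; ring

theorem linearIndependent_expQuad : LinearIndependent ℝ expQuad := by
  classical
  rw [linearIndependent_iff']
  intro s
  refine Finset.induction_on_max_value toLex s (by simp) fun m s hms hmax ih c hc => ?_
  have hratio : ∀ x, ∑ q ∈ insert m s, c q * (expQuad q x / expQuad m x) = 0 := fun x => by
    have hx : ∑ q ∈ insert m s, c q * expQuad q x = 0 := by simpa using congrFun hc x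
    simp only [mul_div_assoc', ← Finset.sum_div, hx, zero_div]
  have hlim : Tendsto (fun x => ∑ q ∈ insert m s, c q * (expQuad q x / expQuad m x))
      atTop (𝓝 (c m)) := by
    have hs : ∀ q ∈ s, Tendsto (fun x => c q * (expQuad q x / expQuad m x)) atTop (𝓝 0) :=
      fun q hq => by
        have hlt : toLex q < toLex m :=
          (hmax q hq).lt_of_ne fun h => hms (toLex.injective h ▸ hq)
        simpa using (tendsto_expQuad_div_expQuad hlt).const_mul (c q)
    simpa [sum_insert hms, div_self (exp_pos _).ne', expQuad] using
      (tendsto_finsetSum s hs).const_add (c m)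
  have hm : c m = 0 := tendsto_nhds_unique hlim (by simp only [hratio, tendsto_const_nhds])
  rw [sum_insert hms, hm, zero_smul, zero_add] at hc
  intro q hq
  rcases mem_insert.1 hq with rfl | hq
  exacts [hm, ih c hc q hq]

noncomputable def gaussNatParam (q : ℝ × ℝ) : ℝ × ℝ := (-(2 * q.2)⁻¹, q.1 / q.2)

noncomputable def gaussNormConst (q : ℝ × ℝ) : ℝ :=
  (√(2 * π * q.2))⁻¹ * exp (-q.1 ^ 2 / (2 * q.2))

theorem gaussPDF_eq_smul_expQuad (q : ℝ × ℝ) :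
    gaussPDF q.1 q.2 = gaussNormConst q • expQuad (gaussNatParam q) := by
  ext x
  simp only [gaussPDF, gaussNormConst, expQuad, gaussNatParam, Pi.smul_apply, smul_eq_mul,
    mul_assoc, ← exp_add]
  ring_nf

theorem gaussNormConst_pos {q : ℝ × ℝ} (hq : 0 < q.2) : 0 < gaussNormConst q := by
  unfold gaussNormConst; positivity

theorem gaussNatParam_injOn : Set.InjOn gaussNatParam {q | q.2 ≠ 0} := by
  rintro ⟨μ, v⟩ hv ⟨μ', v'⟩ hv' h
  simp only [gaussNatParam, Prod.mk.injEq, neg_inj, inv_inj] at h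
  obtain ⟨hv₂, hμ⟩ := h
  obtain rfl : v = v' := mul_left_cancel₀ two_ne_zero hv₂
  rw [div_left_inj' hv] at hμ
  rw [hμ]

-- For `v ≤ 0` the junk values of `√` and `⁻¹` make `gaussPDF μ v` identically `0`.
theorem linearIndependent_gaussPDF :
    LinearIndependent ℝ fun q : {q : ℝ × ℝ // 0 < q.2} => gaussPDF q.1.1 q.1.2 := by
  have hinj : Function.Injective fun q : {q : ℝ × ℝ // 0 < q.2} => gaussNatParam q :=
    fun q r h => Subtype.ext (gaussNatParam_injOn q.2.ne' r.2.ne' h)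
  convert (linearIndependent_expQuad.comp _ hinj).units_smul
    fun q => Units.mk0 _ (gaussNormConst_pos q.2).ne' using 1
  ext q : 1
  exact gaussPDF_eq_smul_expQuad q

theorem stmt_13_general {K : ℕ} (w w' μ μ' v v' : Fin K → ℝ)
    (hv : ∀ k, 0 < v k) (hv' : ∀ j, 0 < v' j)
    (hw : ∀ k, 0 < w k) (hw' : ∀ j, 0 < w' j)
    (hdist : Function.Injective fun k => (μ k, v k))
    (hdist' : Function.Injective fun j => (μ' j, v' j))
    (heq : ∀ x : ℝ, ∑ k, w k * gaussPDF (μ k) (v k) x = ∑ j, w' j * gaussPDF (μ' j) (v' j) x) :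
    (Finset.univ.val.map fun k => (w k, μ k, v k)) =
      (Finset.univ.val.map fun j => (w' j, μ' j, v' j)) := by
  let p : Fin K → {q : ℝ × ℝ // 0 < q.2} := fun k => ⟨(μ k, v k), hv k⟩
  let p' : Fin K → {q : ℝ × ℝ // 0 < q.2} := fun j => ⟨(μ' j, v' j), hv' j⟩
  have hmix : ∑ k, w k • gaussPDF (p k).1.1 (p k).1.2 =
      ∑ j, w' j • gaussPDF (p' j).1.1 (p' j).1.2 := by
    ext x
    simpa using heq x
  have h := linearIndependent_gaussPDF.map_univ_val_eq_of_sum_eq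
    (fun k l hkl => hdist (congrArg Subtype.val hkl))
    (fun k l hkl => hdist' (congrArg Subtype.val hkl))
    (fun k => (hw k).ne') (fun j => (hw' j).ne') hmix
  have h' := congrArg (Multiset.map (Prod.map id Subtype.val)) h
  rwa [Multiset.map_map, Multiset.map_map] at h'

/-- Identifiability of finite mixtures of distinct univariate Gaussians: equal mixtures
imply the multisets of (weight, mean, variance) triples coincide. -/
theorem stmt_13 {K : ℕ} (w w' μ μ' v v' : Fin K → ℝ)
    (hv : ∀ k, 0 < v k) (hv' : ∀ j, 0 < v' j)
    (hw : ∀ k, 0 < w k) (hw' : ∀ j, 0 < w' j)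
    (hwsum : ∑ k, w k = 1) (hwsum' : ∑ j, w' j = 1)
    (hdist : Function.Injective fun k => (μ k, v k))
    (hdist' : Function.Injective fun j => (μ' j, v' j))
    (heq : ∀ x : ℝ, ∑ k, w k * gaussPDF (μ k) (v k) x = ∑ j, w' j * gaussPDF (μ' j) (v' j) x) :
    (Finset.univ.val.map fun k => (w k, μ k, v k)) =
      (Finset.univ.val.map fun j => (w' j, μ' j, v' j)) :=
  stmt_13_general w w' μ μ' v v' hv hv' hw hw' hdist hdist' heq
end
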